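/- arXiv:2209.12317 — 8 statements merged into one kernel-verified Lean document; each statement's English description precedes it below -/
import Mathlib

section
/- Let 𝒰 be a selective ultrafilter on ω and let 𝒢 ⊆ G^ω be a countable set of sequences such that ([g]_𝒰 : g ∈ 𝒢) together with ([χ⃗_μ]_𝒰 : μ ∈ λ) is ℚ-linearly independent in Ult_𝒰(G). Let ℋ' ⊆ 𝒢 be finite, let (r_g : g ∈ ℋ') be rational numbers not all zero, and let B' ∈ 𝒰 be such that the map n ↦ Σ_{g ∈ ℋ'} r_g·g(n) is injective on B'. Let 𝔸 be an almost disjoint family on B' of cardinality 𝔠 (i.e., a family of infinite subsets of B' any two distinct members of which have finite intersection), and for each x ∈ 𝔸 let h_x : ω → G be a bijection from ω onto {Σ_{g ∈ ℋ'} r_g·g(n) : n ∈ x}. Then there exist distinct x₀, x₁ ∈ 𝔸 such that ([g]_𝒰 : g ∈ 𝒢) together with ([χ⃗_μ]_𝒰 : μ ∈ λ) and [h_{x₀}]_𝒰, [h_{x₁}]_𝒰 is a ℚ-linearly independent family in Ult_𝒰(G). -/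
open Cardinal Filter Set

noncomputable section

/-- The index set: ordinals below an (infinite) cardinal `lam`. -/
abbrev Idx (lam : Cardinal) := {o : Ordinal // o < lam.ord}

/-- `G = ℚ^(λ)`, the group of finitely supported functions `λ → ℚ`. -/
abbrev G (lam : Cardinal) := Idx lam →₀ ℚ

/-- The circle group `𝕋 = ℝ/ℤ`. -/
abbrev CircleT := AddCircle (1 : ℝ)

/-- `χ_μ`. -/
def chi (lam : Cardinal) (μ : Idx lam) : G lam := Finsupp.single μ 1

/-- An ultrafilter on `ω` is selective if every `f : ω → ω` is constant or injective
on some member of the ultrafilter. -/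
def IsSelective (𝒰 : Ultrafilter ℕ) : Prop :=
  ∀ f : ℕ → ℕ, ∃ A ∈ 𝒰, Set.InjOn f A ∨ ∀ m ∈ A, ∀ n ∈ A, f m = f n

/-- `z` is the `𝒰`-limit of the sequence `x`. -/
def ULim {X : Type*} [TopologicalSpace X] (𝒰 : Ultrafilter ℕ) (x : ℕ → X) (z : X) : Prop :=
  ∀ A ∈ nhds z, {n | x n ∈ A} ∈ 𝒰

/-- `[g]_𝒰`, the class of `g` in the ultrapower `Ult_𝒰(G)` (= the germ of `g` at `𝒰`). -/
def germ (lam : Cardinal) (𝒰 : Ultrafilter ℕ) (g : ℕ → G lam) :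
    Filter.Germ (𝒰 : Filter ℕ) (G lam) := g

/-- The combined family `([g]_𝒰 : g ∈ H) ∪ ([χ⃗_μ]_𝒰 : μ ∈ λ)` in `Ult_𝒰(G)`. -/
def extFam (lam : Cardinal) (𝒰 : Ultrafilter ℕ) (H : Set (ℕ → G lam)) :
    H ⊕ Idx lam → Filter.Germ (𝒰 : Filter ℕ) (G lam) :=
  Sum.elim (fun g => germ lam 𝒰 g) (fun μ => germ lam 𝒰 (fun _ => chi lam μ))

/-- The Claim in Lemma 3.6: from an almost disjoint family of size `𝔠` one can pick
`x₀ ≠ x₁` keeping the extended family linearly independent in the ultrapower. -/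
theorem statement2 (lam : Cardinal) (hlam : ℵ₀ ≤ lam) (𝒰 : Ultrafilter ℕ)
    (hsel : IsSelective 𝒰) (𝒢 : Set (ℕ → G lam)) (h𝒢c : 𝒢.Countable)
    (h𝒢ind : LinearIndependent ℚ (extFam lam 𝒰 𝒢))
    (H' : Finset (ℕ → G lam)) (hH' : ↑H' ⊆ 𝒢)
    (r : (ℕ → G lam) → ℚ) (hr : ∃ g ∈ H', r g ≠ 0)
    (B' : Set ℕ) (hB' : B' ∈ 𝒰)
    (hinj : Set.InjOn (fun n => ∑ g ∈ H', r g • g n) B')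
    (𝔸 : Set (Set ℕ)) (h𝔸sub : ∀ x ∈ 𝔸, x ⊆ B') (h𝔸inf : ∀ x ∈ 𝔸, x.Infinite)
    (h𝔸ad : ∀ x ∈ 𝔸, ∀ y ∈ 𝔸, x ≠ y → (x ∩ y).Finite)
    (h𝔸card : #𝔸 = Cardinal.continuum)
    (h : Set ℕ → ℕ → G lam)
    (hbij : ∀ x ∈ 𝔸, Function.Injective (h x) ∧
      Set.range (h x) = (fun n => ∑ g ∈ H', r g • g n) '' x) :
    ∃ x₀ ∈ 𝔸, ∃ x₁ ∈ 𝔸, x₀ ≠ x₁ ∧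
      LinearIndependent ℚ
        (Sum.elim (extFam lam 𝒰 𝒢)
          (fun b : Bool => germ lam 𝒰 (h (if b then x₁ else x₀)))) := by
    classical
  set F : ℕ → G lam := fun n => ∑ g ∈ H', r g • g n with hF
  obtain ⟨g₀, hg₀H, hg₀r⟩ := hr
  have hg₀𝒢 : g₀ ∈ 𝒢 := hH' hg₀H
  obtain ⟨e, he⟩ : ∃ e : ℕ → (ℕ → G lam), 𝒢 = Set.range e :=
    h𝒢c.exists_eq_range ⟨g₀, hg₀𝒢⟩
  -- abbreviations for germ arithmetic
  have germ_add : ∀ f g' : ℕ → G lam,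
      germ lam 𝒰 (f + g') = germ lam 𝒰 f + germ lam 𝒰 g' := fun f g' =>
    Filter.Germ.coe_add f g'
  have germ_smul : ∀ (a : ℚ) (f : ℕ → G lam),
      germ lam 𝒰 (a • f) = a • germ lam 𝒰 f := fun a f =>
    Filter.Germ.coe_smul a f
  have germ_zero : germ lam 𝒰 0 = 0 := Filter.Germ.coe_zero
  -- the constant embedding, as a linear map
  let L : G lam →ₗ[ℚ] Filter.Germ (𝒰 : Filter ℕ) (G lam) :=
    { toFun := fun c => germ lam 𝒰 (fun _ => c)
      map_add' := fun c d => Filter.Germ.coe_add (fun _ => c) (fun _ => d)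
      map_smul' := fun a c => Filter.Germ.coe_smul a (fun _ => c) }
  -- sums of germs
  have coe_sum : ∀ (s : Finset ℕ) (q : ℕ → ℚ),
      germ lam 𝒰 (fun n => ∑ i ∈ s, q i • e i n)
        = ∑ i ∈ s, q i • germ lam 𝒰 (e i) := by
    intro s q
    induction s using Finset.induction_on with
    | empty =>
        rw [show (fun n => ∑ i ∈ (∅ : Finset ℕ), q i • e i n) = (0 : ℕ → G lam) by
          funext n; simp]
        simp [germ_zero]
    | insert b s ha ih =>
        rw [show (fun n => ∑ i ∈ insert b s, q i • e i n)
            = (q b • e b + fun n => ∑ i ∈ s, q i • e i n : ℕ → G lam) by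
          funext n; rw [Finset.sum_insert ha]; rfl]
        rw [germ_add, germ_smul, ih, Finset.sum_insert ha]
  -- every member of the ultrafilter is infinite
  have inf_mem : ∀ A : Set ℕ, A ∈ 𝒰 → A.Infinite := by
    intro A hA
    by_contra hfin
    rw [Set.not_infinite] at hfin
    obtain ⟨a, -, hpure⟩ := Ultrafilter.eq_pure_of_finite_mem hfin hA
    have hne : (Sum.inl ⟨g₀, hg₀𝒢⟩ : ↥𝒢 ⊕ Idx lam)
        ∉ Set.range (Sum.inr : Idx lam → ↥𝒢 ⊕ Idx lam) := by simp
    refine h𝒢ind.notMem_span_image hne ?_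
    have hgerm : extFam lam 𝒰 𝒢 (Sum.inl ⟨g₀, hg₀𝒢⟩) = L (g₀ a) := by
      show germ lam 𝒰 g₀ = germ lam 𝒰 (fun _ => g₀ a)
      refine Filter.Germ.coe_eq.mpr ?_
      show {n | g₀ n = g₀ a} ∈ (𝒰 : Filter ℕ)
      rw [hpure]
      show {n | g₀ n = g₀ a} ∈ (pure a : Filter ℕ)
      rw [Filter.mem_pure]
      exact rfl
    rw [hgerm]
    have hrepr : (g₀ a) = ∑ ξ ∈ (g₀ a).support, (g₀ a) ξ • chi lam ξ := by
      conv_lhs => rw [← Finsupp.sum_single (g₀ a)]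
      rw [Finsupp.sum]
      refine Finset.sum_congr rfl fun ξ _ => ?_
      rw [chi, Finsupp.smul_single, smul_eq_mul, mul_one]
    rw [hrepr, map_sum]
    refine Submodule.sum_mem _ fun ξ _ => ?_
    rw [map_smul]
    refine Submodule.smul_mem _ _ (Submodule.subset_span ?_)
    exact ⟨Sum.inr ξ, ⟨ξ, rfl⟩, rfl⟩
  -- the germs of the h x, x ∈ 𝔸, are pairwise distinct
  have key : ∀ x ∈ 𝔸, ∀ y ∈ 𝔸,
      germ lam 𝒰 (h x) = germ lam 𝒰 (h y) → x = y := by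
    intro x hx y hy hxy
    by_contra hne
    have hA : {n | h x n = h y n} ∈ 𝒰 := Filter.Germ.coe_eq.mp hxy
    have hpx : ∀ n : ℕ, ∃ m, m ∈ x ∧ F m = h x n := by
      intro n
      have hmem : h x n ∈ Set.range (h x) := ⟨n, rfl⟩
      rw [(hbij x hx).2] at hmem
      obtain ⟨m, hm, hFm⟩ := hmem
      exact ⟨m, hm, hFm⟩
    have hpy : ∀ n : ℕ, ∃ m, m ∈ y ∧ F m = h y n := by
      intro n
      have hmem : h y n ∈ Set.range (h y) := ⟨n, rfl⟩
      rw [(hbij y hy).2] at hmem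
      obtain ⟨m, hm, hFm⟩ := hmem
      exact ⟨m, hm, hFm⟩
    choose px hpx1 hpx2 using hpx
    choose py hpy1 hpy2 using hpy
    have hsub : px '' {n | h x n = h y n} ⊆ x ∩ y := by
      rintro - ⟨n, hn, rfl⟩
      have h1 : F (px n) = F (py n) := by
        rw [hpx2, hpy2]; exact hn
      have h2 : px n = py n :=
        hinj (h𝔸sub x hx (hpx1 n)) (h𝔸sub y hy (hpy1 n)) h1
      exact ⟨hpx1 n, h2 ▸ hpy1 n⟩
    have hinjpx : Set.InjOn px {n | h x n = h y n} := by
      intro a _ b _ hab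
      have h1 : F (px a) = F (px b) := by rw [hab]
      rw [hpx2, hpx2] at h1
      exact (hbij x hx).1 h1
    have : (x ∩ y).Infinite :=
      (((inf_mem _ hA).image hinjpx).mono hsub)
    exact this (h𝔸ad x hx y hy hne)
  -- decomposition of elements of the span of the old family
  have decomp : ∀ z : Filter.Germ (𝒰 : Filter ℕ) (G lam),
      z ∈ Submodule.span ℚ (Set.range (extFam lam 𝒰 𝒢)) →
      ∃ (q : ℕ →₀ ℚ) (c : G lam),
        z = (q.sum fun i b => b • germ lam 𝒰 (e i)) + L c := by
    intro z hz
    rw [show extFam lam 𝒰 𝒢 = Sum.elim (fun g : ↥𝒢 => germ lam 𝒰 (g : ℕ → G lam))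
        (fun μ => germ lam 𝒰 (fun _ => chi lam μ)) from rfl,
      Set.Sum.elim_range, Submodule.span_union, Submodule.mem_sup] at hz
    obtain ⟨z₁, hz₁, z₂, hz₂, rfl⟩ := hz
    have hrange : Set.range (fun g : ↥𝒢 => germ lam 𝒰 (g : ℕ → G lam))
        = Set.range (fun i => germ lam 𝒰 (e i)) := by
      ext w
      constructor
      · rintro ⟨⟨g, hg⟩, rfl⟩
        rw [he] at hg
        obtain ⟨i, rfl⟩ := hg
        exact ⟨i, rfl⟩
      · rintro ⟨i, rfl⟩
        exact ⟨⟨e i, by rw [he]; exact ⟨i, rfl⟩⟩, rfl⟩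
    rw [hrange, Finsupp.mem_span_range_iff_exists_finsupp] at hz₁
    obtain ⟨q, hq⟩ := hz₁
    have hz₂' : z₂ ∈ LinearMap.range L := by
      refine Submodule.span_le.mpr ?_ hz₂
      rintro - ⟨μ, rfl⟩
      exact ⟨chi lam μ, rfl⟩
    obtain ⟨c, hc⟩ := hz₂'
    exact ⟨q, c, by rw [hq, hc]⟩
  -- packaging a finsupp combination plus constants as a single germ
  have germ_fun : ∀ (q : ℕ →₀ ℚ) (a : ℚ) (c : G lam) (u : ℕ → G lam),
      (q.sum fun i b => b • germ lam 𝒰 (e i)) + a • germ lam 𝒰 u + L c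
        = germ lam 𝒰 (fun n => (∑ i ∈ q.support, q i • e i n) + a • u n + c) := by
    intro q a c u
    rw [show (fun n => (∑ i ∈ q.support, q i • e i n) + a • u n + c)
        = ((fun n => ∑ i ∈ q.support, q i • e i n) + a • u + (fun _ => c) : ℕ → G lam)
        from rfl, germ_add, germ_add, germ_smul, coe_sum]
    rfl
  -- the main countability lemma
  have badCtble : ∀ u : ℕ → G lam,
      {x | x ∈ 𝔸 ∧ ∃ a : ℚ,
        germ lam 𝒰 (h x) - a • germ lam 𝒰 u
          ∈ Submodule.span ℚ (Set.range (extFam lam 𝒰 𝒢))}.Countable := by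
    intro u
    set Bad := {x | x ∈ 𝔸 ∧ ∃ a : ℚ,
        germ lam 𝒰 (h x) - a • germ lam 𝒰 u
          ∈ Submodule.span ℚ (Set.range (extFam lam 𝒰 𝒢))} with hBad
    let Q := (ℕ →₀ ℚ) × ℚ × ℕ × ℕ
    let C : Q → Set (Set ℕ) := fun p =>
      {x | x ∈ 𝔸 ∧ germ lam 𝒰 (h x) = germ lam 𝒰 (fun n =>
        (∑ i ∈ p.1.support, p.1 i • e i n) + p.2.1 • u n +
          (F p.2.2.2 - (∑ i ∈ p.1.support, p.1 i • e i p.2.2.1) - p.2.1 • u p.2.2.1))}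
    have hcover : Bad ⊆ ⋃ p : Q, C p := by
      rintro x ⟨hx𝔸, a, hmem⟩
      obtain ⟨q, c, hd⟩ := decomp _ hmem
      have hd' : germ lam 𝒰 (h x)
          = ((q.sum fun i b => b • germ lam 𝒰 (e i)) + L c) + a • germ lam 𝒰 u :=
        sub_eq_iff_eq_add.mp hd
      have h2 : germ lam 𝒰 (h x)
          = germ lam 𝒰 (fun n => (∑ i ∈ q.support, q i • e i n) + a • u n + c) := by
        rw [← germ_fun q a c u, hd']
        abel
      have hS : ∀ᶠ n in (𝒰 : Filter ℕ),
          h x n = (∑ i ∈ q.support, q i • e i n) + a • u n + c :=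
        Filter.Germ.coe_eq.mp h2
      obtain ⟨n₀, hn₀⟩ := hS.exists
      have hmemr : h x n₀ ∈ Set.range (h x) := ⟨n₀, rfl⟩
      rw [(hbij x hx𝔸).2] at hmemr
      obtain ⟨m₀, -, hFm₀⟩ := hmemr
      have hc : F m₀ - (∑ i ∈ q.support, q i • e i n₀) - a • u n₀ = c := by
        rw [hFm₀, hn₀]
        abel
      refine Set.mem_iUnion.mpr ⟨(q, a, n₀, m₀), hx𝔸, ?_⟩
      show germ lam 𝒰 (h x) = germ lam 𝒰 (fun n =>
        (∑ i ∈ q.support, q i • e i n) + a • u n +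
          (F m₀ - (∑ i ∈ q.support, q i • e i n₀) - a • u n₀))
      rw [hc]
      exact h2
    refine Set.Countable.mono hcover ?_
    refine Set.countable_iUnion fun p => ?_
    refine Set.Subsingleton.countable ?_
    rintro x ⟨hx𝔸, hx⟩ y ⟨hy𝔸, hy⟩
    exact key x hx𝔸 y hy𝔸 (hx.trans hy.symm)
  -- 𝔸 is uncountable
  have hAunc : ¬ 𝔸.Countable := by
    intro hc
    have h1 : (#𝔸 : Cardinal) ≤ ℵ₀ := Cardinal.le_aleph0_iff_set_countable.mpr hc
    rw [h𝔸card] at h1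
    exact absurd h1 (not_le.mpr Cardinal.aleph0_lt_continuum)
  -- choose x₀
  have hBad0 := badCtble (fun _ => 0)
  obtain ⟨x₀, hx₀𝔸, hx₀⟩ : ∃ x ∈ 𝔸, x ∉ {x | x ∈ 𝔸 ∧ ∃ a : ℚ,
      germ lam 𝒰 (h x) - a • germ lam 𝒰 (fun _ => 0)
        ∈ Submodule.span ℚ (Set.range (extFam lam 𝒰 𝒢))} := by
    by_contra hcon
    push_neg at hcon
    exact hAunc (Set.Countable.mono hcon hBad0)
  have hgerm0 : germ lam 𝒰 (fun _ => (0 : G lam)) = 0 := germ_zero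
  have hx₀N : germ lam 𝒰 (h x₀) ∉ Submodule.span ℚ (Set.range (extFam lam 𝒰 𝒢)) := by
    intro hmem
    exact hx₀ ⟨hx₀𝔸, 0, by simpa [hgerm0] using hmem⟩
  -- choose x₁
  have hBad1 := badCtble (h x₀)
  obtain ⟨x₁, hx₁𝔸, hx₁⟩ : ∃ x ∈ 𝔸, x ∉
      ({x | x ∈ 𝔸 ∧ ∃ a : ℚ,
        germ lam 𝒰 (h x) - a • germ lam 𝒰 (fun _ => 0)
          ∈ Submodule.span ℚ (Set.range (extFam lam 𝒰 𝒢))} ∪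
       {x | x ∈ 𝔸 ∧ ∃ a : ℚ,
        germ lam 𝒰 (h x) - a • germ lam 𝒰 (h x₀)
          ∈ Submodule.span ℚ (Set.range (extFam lam 𝒰 𝒢))} ∪ {x₀}) := by
    by_contra hcon
    push_neg at hcon
    exact hAunc (Set.Countable.mono hcon
      ((hBad0.union hBad1).union (Set.countable_singleton x₀)))
  rw [Set.mem_union, Set.mem_union] at hx₁
  push_neg at hx₁
  obtain ⟨⟨hx₁b0, hx₁b1⟩, hx₁ne⟩ := hx₁
  have hne : x₀ ≠ x₁ := fun hxx => hx₁ne (by rw [hxx]; rfl)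
  have hx₁N : germ lam 𝒰 (h x₁) ∉ Submodule.span ℚ (Set.range (extFam lam 𝒰 𝒢)) := by
    intro hmem
    exact hx₁b0 ⟨hx₁𝔸, 0, by simpa [hgerm0] using hmem⟩
  have hx₁pair : ∀ a : ℚ, germ lam 𝒰 (h x₁) - a • germ lam 𝒰 (h x₀)
      ∉ Submodule.span ℚ (Set.range (extFam lam 𝒰 𝒢)) := by
    intro a hmem
    exact hx₁b1 ⟨hx₁𝔸, a, hmem⟩
  refine ⟨x₀, hx₀𝔸, x₁, hx₁𝔸, hne, ?_⟩
  -- the pair is independent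
  have pairInd : LinearIndependent ℚ
      (fun b : Bool => germ lam 𝒰 (h (if b then x₁ else x₀))) := by
    rw [← linearIndependent_equiv finTwoEquiv]
    rw [linearIndependent_fin2]
    constructor
    · show germ lam 𝒰 (h (if finTwoEquiv 1 then x₁ else x₀)) ≠ 0
      have : finTwoEquiv 1 = true := rfl
      rw [this]
      intro h0
      exact hx₁N (by rw [if_pos rfl] at h0; rw [h0]; exact Submodule.zero_mem _)
    · intro a ha
      have h1 : finTwoEquiv 1 = true := rfl
      have h0 : finTwoEquiv 0 = false := rfl
      rw [Function.comp_apply, Function.comp_apply, h1, h0] at ha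
      rw [if_pos rfl, if_neg Bool.false_ne_true] at ha
      by_cases haz : a = 0
      · rw [haz, zero_smul] at ha
        exact hx₀N (ha ▸ Submodule.zero_mem _)
      · have : germ lam 𝒰 (h x₁) - a⁻¹ • germ lam 𝒰 (h x₀) = 0 := by
          rw [← ha, smul_smul, inv_mul_cancel₀ haz, one_smul, sub_self]
        exact hx₁pair a⁻¹ (this ▸ Submodule.zero_mem _)
  refine LinearIndependent.sum_type h𝒢ind pairInd ?_
  -- disjointness of the spans
  have hrange : Set.range (fun b : Bool => germ lam 𝒰 (h (if b then x₁ else x₀)))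
      = {germ lam 𝒰 (h x₀), germ lam 𝒰 (h x₁)} := by
    ext z
    constructor
    · rintro ⟨b, rfl⟩
      cases b
      · exact Or.inl rfl
      · exact Or.inr rfl
    · rintro (rfl | rfl)
      · exact ⟨false, rfl⟩
      · exact ⟨true, rfl⟩
  rw [hrange]
  rw [Submodule.disjoint_def]
  intro z hzN hzp
  rw [Submodule.mem_span_pair] at hzp
  obtain ⟨a, b, hab⟩ := hzp
  by_cases hb : b = 0
  · rw [hb, zero_smul, add_zero] at hab
    by_cases ha : a = 0
    · rw [ha, zero_smul] at hab
      exact hab.symm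
    · exfalso
      apply hx₀N
      have : germ lam 𝒰 (h x₀) = a⁻¹ • z := by
        rw [← hab, smul_smul, inv_mul_cancel₀ ha, one_smul]
      rw [this]
      exact Submodule.smul_mem _ _ hzN
  · exfalso
    apply hx₁pair (-(b⁻¹ * a))
    have heq : germ lam 𝒰 (h x₁) - (-(b⁻¹ * a)) • germ lam 𝒰 (h x₀) = b⁻¹ • z := by
      rw [← hab, smul_add, smul_smul, smul_smul, inv_mul_cancel₀ hb, one_smul,
        neg_smul, sub_neg_eq_add]
      exact add_comm _ _
    rw [heq]
    exact Submodule.smul_mem _ _ hzN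
end
end

section
/- Let V be a vector space over ℚ and let (v_i : i ∈ I) be a family of pairwise distinct vectors of V with |I| = 𝔠. Then there exists J ⊆ I with |J| = 𝔠 such that the family (v_i : i ∈ J) is linearly independent over ℚ. -/
open Cardinal

/-- Any family of `𝔠` pairwise distinct vectors of a `ℚ`-vector space contains a
linearly independent subfamily of size `𝔠`. -/
theorem statement3 {V : Type*} [AddCommGroup V] [Module ℚ V] {I : Type*}
    (v : I → V) (hv : Function.Injective v) (hI : #I = Cardinal.continuum) :
    ∃ J : Set I, #J = Cardinal.continuum ∧ LinearIndependent ℚ (fun j : J => v j) := by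
  obtain ⟨b, hbt, hspan, hli⟩ := exists_linearIndependent ℚ (Set.range v)
  have hrange : #(Set.range v) = Cardinal.continuum := by
    have h1 := Cardinal.mk_range_eq_lift.{_,_,0} hv
    rw [hI, Cardinal.lift_continuum] at h1
    exact Cardinal.lift_inj.mp (h1.trans Cardinal.lift_continuum.symm)
  have hble : #b ≤ Cardinal.continuum := by
    rw [← hrange]; exact Cardinal.mk_le_mk_of_subset hbt
  have hbc : #b = Cardinal.continuum := by
    refine le_antisymm hble ?_
    by_contra h
    push_neg at h
    -- The span of `b` has cardinality at most `max #b ℵ₀ < 𝔠`, but it contains `range v`.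
    have hb' : Set.range ((↑) : b → V) = b := Subtype.range_coe
    have hspan' : Submodule.span ℚ (Set.range ((↑) : b → V)) =
        Submodule.span ℚ (Set.range v) := by rw [hb', hspan]
    let B : Module.Basis b ℚ (Submodule.span ℚ (Set.range ((↑) : b → V))) := Module.Basis.span hli
    have hcard : #(Submodule.span ℚ (Set.range ((↑) : b → V))) = #(b →₀ ℚ) :=
      B.repr.toEquiv.cardinal_eq
    have hfin : #(b →₀ ℚ) < Cardinal.continuum := by
      rcases finite_or_infinite b with hb | hb
      · have : Countable (b →₀ ℚ) := by infer_instance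
        exact (Cardinal.mk_le_aleph0).trans_lt Cardinal.aleph0_lt_continuum
      · rw [Cardinal.mk_finsupp_lift_of_infinite]
        apply max_lt
        · rwa [Cardinal.lift_lt_continuum]
        · rw [Cardinal.mk_denumerable, Cardinal.lift_aleph0]
          exact Cardinal.aleph0_lt_continuum
    have hsub : Set.range v ⊆ (Submodule.span ℚ (Set.range ((↑) : b → V)) : Set V) := by
      rw [hspan']; exact Submodule.subset_span
    have : #(Set.range v) ≤ #(Submodule.span ℚ (Set.range ((↑) : b → V))) :=
      Cardinal.mk_le_mk_of_subset hsub
    rw [hrange, hcard] at this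
    exact absurd this (not_le.mpr hfin)
  refine ⟨v ⁻¹' b, ?_, ?_⟩
  · have h2 := Cardinal.mk_preimage_of_injective_of_subset_range_lift v b hv hbt
    rw [hbc, Cardinal.lift_continuum] at h2
    exact Cardinal.lift_inj.mp (h2.trans Cardinal.lift_continuum.symm)
  · have hmem : ∀ j : (v ⁻¹' b : Set I), v (j : I) ∈ b := fun j => j.2
    let g : (v ⁻¹' b : Set I) → b := fun j => ⟨v j, hmem j⟩
    have hg : Function.Injective g := by
      intro x y hxy
      apply Subtype.ext
      apply hv
      exact congrArg Subtype.val hxy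
    have := hli.comp g hg
    exact this
end

section
/- Let 𝒰 be a selective ultrafilter on ω, let ℋ' ⊆ G^ω be a finite set of sequences such that ([g]_𝒰 : g ∈ ℋ') together with ([χ⃗_μ]_𝒰 : μ ∈ λ) is ℚ-linearly independent in Ult_𝒰(G), let (r_g : g ∈ ℋ') be rational numbers not all zero, and let B ∈ 𝒰. Then there exists B' ∈ 𝒰 with B' ⊆ B such that the map n ↦ Σ_{g ∈ ℋ'} r_g·g(n) is injective on B'. -/
open Cardinal Filter Set

noncomputable section

/-- For a selective ultrafilter `𝒰` and a nontrivial rational combination of sequences that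
is linearly independent (with the constants) in the ultrapower, the combination is injective
on some member of `𝒰` contained in a given `B ∈ 𝒰`. -/
theorem statement5 (lam : Cardinal) (hlam : ℵ₀ ≤ lam) (𝒰 : Ultrafilter ℕ)
    (hsel : IsSelective 𝒰) (H' : Finset (ℕ → G lam))
    (hind : LinearIndependent ℚ (extFam lam 𝒰 ↑H'))
    (r : (ℕ → G lam) → ℚ) (hr : ∃ g ∈ H', r g ≠ 0)
    (B : Set ℕ) (hB : B ∈ 𝒰) :
    ∃ B' ∈ 𝒰, B' ⊆ B ∧ Set.InjOn (fun n => ∑ g ∈ H', r g • g n) B' := by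
  classical
  set h : ℕ → G lam := fun n => ∑ g ∈ H', r g • g n with hh
  have hne : ∀ n : ℕ, {m | h m = h n}.Nonempty := fun n => ⟨n, rfl⟩
  set f : ℕ → ℕ := fun n => sInf {m | h m = h n} with hf
  have hfix : ∀ n, h (f n) = h n := fun n => Nat.sInf_mem (hne n)
  have hiff : ∀ m n, f m = f n ↔ h m = h n := by
    intro m n
    constructor
    · intro e
      rw [← hfix m, ← hfix n, e]
    · intro e
      simp only [hf]
      congr 1
      ext k
      simp [e]
  obtain ⟨A, hA, hc⟩ := hsel f
  rcases hc with hinj | hconst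
  · exact ⟨A ∩ B, inter_mem hA hB, inter_subset_right,
      fun m hm n hn e => hinj hm.1 hn.1 ((hiff m n).2 e)⟩
  · exfalso
    obtain ⟨n₀, hn₀⟩ := Filter.nonempty_of_mem hA
    set c : G lam := h n₀ with hc0
    have hAc : ∀ n ∈ A, h n = c := fun n hn => (hiff n n₀).1 (hconst n hn n₀ hn₀)
    set V := Filter.Germ (𝒰 : Filter ℕ) (G lam) with hV
    let L : (ℕ → G lam) →ₗ[ℚ] V :=
      { toFun := fun g => (g : V)
        map_add' := fun a b => rfl
        map_smul' := fun q a => rfl }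
    have hLh : L h = ∑ g ∈ H'.attach, r g.1 • L g.1 := by
      have hrepr : h = ∑ g ∈ H'.attach, r g.1 • (g.1 : ℕ → G lam) := by
        funext n
        simp only [hh, Finset.sum_apply, Pi.smul_apply]
        exact (Finset.sum_attach H' (fun g => r g • g n)).symm
      rw [hrepr, map_sum]
      simp
    have hLc : L (fun _ => c) = ∑ μ ∈ c.support, c μ • L (fun _ => chi lam μ) := by
      have hrepr : (fun _ => c : ℕ → G lam)
          = ∑ μ ∈ c.support, c μ • (fun _ => chi lam μ : ℕ → G lam) := by
        funext n
        simp only [Finset.sum_apply, Pi.smul_apply, chi]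
        conv_lhs => rw [← Finsupp.sum_single c]
        rw [Finsupp.sum]
        refine Finset.sum_congr rfl fun μ _ => ?_
        rw [Finsupp.smul_single, smul_eq_mul, mul_one]
      rw [hrepr, map_sum]
      simp
    have hgerm : L h = L (fun _ => c) := by
      show (h : V) = ((fun _ => c : ℕ → G lam) : V)
      exact Filter.Germ.coe_eq.mpr (Filter.mem_of_superset hA hAc)
    have hli := linearIndependent_iff'.mp hind
    set s : Finset ((↑H' : Set (ℕ → G lam)) ⊕ Idx lam) :=
      (H'.attach.image fun g => Sum.inl ⟨g.1, g.2⟩) ∪ (c.support.image Sum.inr) with hs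
    set co : ((↑H' : Set (ℕ → G lam)) ⊕ Idx lam) → ℚ :=
      Sum.elim (fun g => r g.1) (fun μ => -c μ) with hco
    have hdisj : Disjoint (H'.attach.image fun g : {x // x ∈ H'} => (Sum.inl ⟨g.1, g.2⟩ :
        (↑H' : Set (ℕ → G lam)) ⊕ Idx lam)) (c.support.image Sum.inr) := by
      simp [Finset.disjoint_left]
    have hsum : ∑ i ∈ s, co i • extFam lam 𝒰 ↑H' i = 0 := by
      rw [hs, Finset.sum_union hdisj, Finset.sum_image (by
          intro x _ y _ e
          exact Subtype.ext (congrArg Subtype.val (Sum.inl_injective e))),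
        Finset.sum_image (by intro x _ y _ e; simpa using e)]
      have e1 : ∑ g ∈ H'.attach, co (Sum.inl ⟨g.1, g.2⟩) •
          extFam lam 𝒰 ↑H' (Sum.inl ⟨g.1, g.2⟩) = L h := by
        rw [hLh]; rfl
      have e2 : ∑ μ ∈ c.support, co (Sum.inr μ) • extFam lam 𝒰 ↑H' (Sum.inr μ)
          = -(L (fun _ => c)) := by
        rw [hLc, ← Finset.sum_neg_distrib]
        refine Finset.sum_congr rfl fun μ _ => ?_
        simp only [hco, Sum.elim_inr, neg_smul]
        rfl
      rw [e1, e2, hgerm, add_neg_cancel]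
    obtain ⟨g₀, hg₀, hr₀⟩ := hr
    have := hli s co hsum (Sum.inl ⟨g₀, hg₀⟩)
      (Finset.mem_union_left _ (Finset.mem_image.mpr ⟨⟨g₀, hg₀⟩, Finset.mem_attach _ _, rfl⟩))
    exact hr₀ this
end
end

section
/- For every ordinal α < 𝔠, the set 𝒜_α = {p ∈ 𝒫 : α^p > α} is open and dense in the poset 𝒫. -/
open Cardinal Filter Set

noncomputable section

structure PCond (lam : Cardinal) (𝒰 : Ultrafilter ℕ) (H : Set (ℕ → G lam)) where
  E : Set (Idx lam)
  E_countable : E.Countable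
  omega_subset : ∀ x : Idx lam, x.1 < Ordinal.omega0 → x ∈ E
  alpha : Ordinal
  alpha_lt : alpha < continuum.ord
  Gs : Set (ℕ → G lam)
  Gs_subset : Gs ⊆ H
  Gs_countable : Gs.Countable
  supp_mem : ∀ g ∈ Gs, ∀ n : ℕ, g n ∈ Finsupp.supported ℚ ℚ E
  xi : Gs → Idx lam
  xi_mem : ∀ g : Gs, xi g ∈ E ∧ (xi g).1 < continuum.ord
  phi : ↥(Finsupp.supported ℚ ℚ E) →+ ({β : Ordinal // β < alpha} → CircleT)
  phi_ulim : ∀ g : Gs, ULim 𝒰 (fun n => phi ⟨g.1 n, supp_mem g.1 g.2 n⟩)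
      (phi ⟨chi lam (xi g), Finsupp.single_mem_supported ℚ 1 (xi_mem g).1⟩)

structure PLe {lam : Cardinal} {𝒰 : Ultrafilter ℕ} {H : Set (ℕ → G lam)}
    (q p : PCond lam 𝒰 H) : Prop where
  E_sub : p.E ⊆ q.E
  alpha_le : p.alpha ≤ q.alpha
  Gs_sub : p.Gs ⊆ q.Gs
  xi_eq : ∀ g : p.Gs, q.xi ⟨g.1, Gs_sub g.2⟩ = p.xi g
  phi_eq : ∀ a (ha : a ∈ Finsupp.supported ℚ ℚ p.E) (β : Ordinal) (hβ : β < p.alpha),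
    q.phi ⟨a, Finsupp.supported_mono E_sub ha⟩ ⟨β, lt_of_lt_of_le hβ alpha_le⟩
      = p.phi ⟨a, ha⟩ ⟨β, hβ⟩

def PCompat {lam : Cardinal} {𝒰 : Ultrafilter ℕ} {H : Set (ℕ → G lam)}
    (p q : PCond lam 𝒰 H) : Prop := ∃ r, PLe r p ∧ PLe r q

def IsOpenD {lam : Cardinal} {𝒰 : Ultrafilter ℕ} {H : Set (ℕ → G lam)}
    (D : Set (PCond lam 𝒰 H)) : Prop := ∀ p ∈ D, ∀ q, PLe q p → q ∈ D

def IsDenseD {lam : Cardinal} {𝒰 : Ultrafilter ℕ} {H : Set (ℕ → G lam)}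
    (D : Set (PCond lam 𝒰 H)) : Prop := ∀ p, ∃ q ∈ D, PLe q p

/-- For each ordinal `α < 𝔠`, the set `𝒜_α = {p ∈ 𝒫 : α^p > α}` is open and dense in `𝒫`. -/
theorem statement7 (lam : Cardinal) (hclam : Cardinal.continuum ≤ lam)
    (𝒰 : Ultrafilter ℕ) (hsel : IsSelective 𝒰) (H : Set (ℕ → G lam))
    (hH : LinearIndependent ℚ (extFam lam 𝒰 H))
    (α : Ordinal) (hα : α < Cardinal.continuum.ord) :
    IsOpenD {p : PCond lam 𝒰 H | α < p.alpha} ∧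
    IsDenseD {p : PCond lam 𝒰 H | α < p.alpha} := by
  constructor
  · intro p hp q hq
    exact lt_of_lt_of_le hp hq.alpha_le
  · intro p
    set A : Ordinal := max p.alpha (Order.succ α) with hA
    have hAlt : A < Cardinal.continuum.ord := by
      apply max_lt p.alpha_lt
      exact (Cardinal.isSuccLimit_ord Cardinal.aleph0_le_continuum).succ_lt hα
    have hle : p.alpha ≤ A := le_max_left _ _
    let phi' : ↥(Finsupp.supported ℚ ℚ p.E) →+ ({β : Ordinal // β < A} → CircleT) :=
      { toFun := fun a β => if h : β.1 < p.alpha then p.phi a ⟨β.1, h⟩ else 0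
        map_zero' := by
          funext β; split <;> simp
        map_add' := by
          intro a b; funext β; by_cases h : β.1 < p.alpha <;> simp [h] }
    refine ⟨{ E := p.E, E_countable := p.E_countable, omega_subset := p.omega_subset,
              alpha := A, alpha_lt := hAlt, Gs := p.Gs, Gs_subset := p.Gs_subset,
              Gs_countable := p.Gs_countable, supp_mem := p.supp_mem,
              xi := p.xi, xi_mem := p.xi_mem, phi := phi', phi_ulim := ?_ }, ?_, ?_⟩
    · intro g
      have hold : Tendsto (fun n => p.phi ⟨g.1 n, p.supp_mem g.1 g.2 n⟩) 𝒰
          (nhds (p.phi ⟨chi lam (p.xi g), Finsupp.single_mem_supported ℚ 1 (p.xi_mem g).1⟩)) :=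
        fun s hs => p.phi_ulim g s hs
      have hnew : Tendsto (fun n => phi' ⟨g.1 n, p.supp_mem g.1 g.2 n⟩) 𝒰
          (nhds (phi' ⟨chi lam (p.xi g), Finsupp.single_mem_supported ℚ 1 (p.xi_mem g).1⟩)) := by
        rw [tendsto_pi_nhds]
        intro β
        simp only [phi', AddMonoidHom.coe_mk, ZeroHom.coe_mk]
        by_cases h : β.1 < p.alpha
        · simp only [h, dif_pos]
          exact tendsto_pi_nhds.mp hold ⟨β.1, h⟩
        · simp only [h, dif_neg, not_false_iff]
          exact tendsto_const_nhds
      exact fun s hs => hnew hs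
    · show α < A
      exact lt_of_lt_of_le (Order.lt_succ α) (le_max_right _ _)
    · exact { E_sub := le_refl _, alpha_le := hle, Gs_sub := le_refl _,
              xi_eq := fun g => rfl,
              phi_eq := by
                intro a ha β hβ
                simp only [phi', AddMonoidHom.coe_mk, ZeroHom.coe_mk, dif_pos hβ] }
end
end

section
/- For every g ∈ ℋ, the set 𝒮_g = {p ∈ 𝒫 : g ∈ 𝒢^p} is open and dense in the poset 𝒫. -/
/-!
Openness is immediate, since `𝒢` only grows along `≤`. For density, pick a coordinate
`ξ < 𝔠` outside the countable set `E^p ∪ ⋃ₙ supp g(n)` (possible since `𝔠 ≤ λ`), let `z` be a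
`𝒰`-limit, in the compact group `𝕋^{α^p}`, of `φ^p` applied to the restrictions of the `g(n)` to
`E^p`, and extend `φ^p` by sending `χ_ξ` to `z` and the other new coordinates to `0`. Since `ξ` is
fresh, the extension still satisfies the old limit conditions, and `ξ_g := ξ` gives the new one.
-/

open Cardinal Filter Set

noncomputable section

namespace Finsupp

variable {ι A : Type*} [AddCommGroup A]

open scoped Classical in
def restrictSupported (E E' : Set ι) : supported ℚ ℚ E' →+ supported ℚ ℚ E :=
  ((restrictDom ℚ ℚ E).comp (supported ℚ ℚ E').subtype).toAddMonoidHom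

theorem restrictSupported_of_mem {E E' : Set ι} {a : ι →₀ ℚ} (ha : a ∈ supported ℚ ℚ E)
    (ha' : a ∈ supported ℚ ℚ E') : restrictSupported E E' ⟨a, ha'⟩ = ⟨a, ha⟩ := by
  classical
  exact Subtype.ext <| (filter_eq_self_iff _ _).2 fun _ hx =>
    (mem_supported ℚ a).1 ha (mem_support_iff.2 hx)

def extendAt {E : Set ι} (φ : supported ℚ ℚ E →+ A) (ξ : ι) (ψ : ℚ →+ A) (E' : Set ι) :
    supported ℚ ℚ E' →+ A :=
  φ.comp (restrictSupported E E') +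
    ψ.comp ((applyAddHom ξ).comp (supported ℚ ℚ E').subtype.toAddMonoidHom)

variable {E E' : Set ι} {φ : supported ℚ ℚ E →+ A} {ξ : ι} {ψ : ℚ →+ A}

theorem extendAt_apply (a : supported ℚ ℚ E') :
    extendAt φ ξ ψ E' a = φ (restrictSupported E E' a) + ψ (a.1 ξ) := rfl

theorem extendAt_of_apply_eq_zero {a : ι →₀ ℚ} (ha' : a ∈ supported ℚ ℚ E') (haξ : a ξ = 0) :
    extendAt φ ξ ψ E' ⟨a, ha'⟩ = φ (restrictSupported E E' ⟨a, ha'⟩) := by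
  rw [extendAt_apply, haξ, map_zero, add_zero]

theorem extendAt_of_mem_supported (hξ : ξ ∉ E) {a : ι →₀ ℚ} (ha : a ∈ supported ℚ ℚ E)
    (ha' : a ∈ supported ℚ ℚ E') : extendAt φ ξ ψ E' ⟨a, ha'⟩ = φ ⟨a, ha⟩ := by
  rw [extendAt_of_apply_eq_zero ha' (notMem_support_iff.1 fun h => hξ ((mem_supported ℚ a).1 ha h)),
    restrictSupported_of_mem ha]

theorem extendAt_single (hξ : ξ ∉ E) (h : single ξ 1 ∈ supported ℚ ℚ E') :
    extendAt φ ξ ψ E' ⟨single ξ 1, h⟩ = ψ 1 := by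
  classical
  have hres : restrictSupported E E' ⟨single ξ 1, h⟩ = 0 :=
    Subtype.ext (filter_single_of_neg _ hξ)
  rw [extendAt_apply, hres, map_zero, zero_add, single_eq_same]

end Finsupp

theorem AddCircle.exists_ratHom_pi_one_eq {ι : Type*} {T : ℝ} (z : ι → AddCircle T) :
    ∃ ψ : ℚ →+ (ι → AddCircle T), ψ 1 = z :=
  ⟨AddMonoidHom.pi fun i => (QuotientAddGroup.mk' _).comp
      ((AddMonoidHom.mulRight (z i).out).comp (Rat.castHom ℝ).toAddMonoidHom),
    funext fun i => by simp⟩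

theorem exists_ulim_of_compactSpace {X : Type*} [TopologicalSpace X] [CompactSpace X]
    (𝒰 : Ultrafilter ℕ) (x : ℕ → X) : ∃ z, ULim 𝒰 x z := by
  obtain ⟨z, -, hz⟩ := isCompact_univ.ultrafilter_le_nhds (𝒰.map x) (by simp)
  exact ⟨z, fun A hA => hz hA⟩

theorem exists_lt_continuum_ord_notMem {lam : Cardinal} (hclam : continuum ≤ lam)
    {S : Set (Idx lam)} (hS : S.Countable) : ∃ ξ : Idx lam, ξ.1 < continuum.ord ∧ ξ ∉ S := by
  by_contra! hcon
  let f : Iio continuum.ord → S := fun o => ⟨⟨o.1, o.2.trans_le (ord_le_ord.2 hclam)⟩, hcon _ o.2⟩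
  have hf : Function.Injective f := fun o o' h => Subtype.ext (congrArg (fun s : S => s.1.1) h)
  have : Countable S := hS.to_subtype
  have hle := mk_le_aleph0_iff.2 hf.countable
  rw [mk_Iio_ordinal, card_ord] at hle
  exact (aleph0_lt_lift.2 aleph0_lt_continuum).not_ge hle

namespace PCond

open Finsupp

variable {lam : Cardinal} {𝒰 : Ultrafilter ℕ} {H : Set (ℕ → G lam)}

theorem exists_le_mem_Gs (p : PCond lam 𝒰 H) {g : ℕ → G lam} (hg : g ∈ H)
    {E' : Set (Idx lam)} (hE' : E'.Countable) (hpE' : p.E ⊆ E')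
    (hgE' : ∀ n, g n ∈ supported ℚ ℚ E') {ξ : Idx lam} (hξE' : ξ ∈ E') (hξE : ξ ∉ p.E)
    (hξc : ξ.1 < continuum.ord) (hgξ : ∀ n, g n ξ = 0) :
    ∃ q : PCond lam 𝒰 H, g ∈ q.Gs ∧ PLe q p := by
  classical
  obtain ⟨z, hz⟩ := exists_ulim_of_compactSpace 𝒰
    fun n => p.phi (restrictSupported p.E E' ⟨g n, hgE' n⟩)
  obtain ⟨ψ, hψ⟩ := AddCircle.exists_ratHom_pi_one_eq z
  set φ := extendAt p.phi ξ ψ E'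
  have hφ : ∀ a (ha : a ∈ supported ℚ ℚ p.E), φ ⟨a, supported_mono hpE' ha⟩ = p.phi ⟨a, ha⟩ :=
    fun a ha => extendAt_of_mem_supported hξE ha _
  let xi : ↥(insert g p.Gs) → Idx lam := fun h => if hh : h.1 ∈ p.Gs then p.xi ⟨h.1, hh⟩ else ξ
  have hsupp : ∀ h ∈ insert g p.Gs, ∀ n, h n ∈ supported ℚ ℚ E' := by
    rintro h (rfl | hh) n
    exacts [hgE' n, supported_mono hpE' (p.supp_mem h hh n)]
  have hxi : ∀ h, xi h ∈ E' ∧ (xi h).1 < continuum.ord := by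
    intro h
    by_cases hh : h.1 ∈ p.Gs
    · simpa [xi, hh] using ⟨hpE' (p.xi_mem ⟨h.1, hh⟩).1, (p.xi_mem ⟨h.1, hh⟩).2⟩
    · simpa [xi, hh] using ⟨hξE', hξc⟩
  have hulim : ∀ h : ↥(insert g p.Gs), ULim 𝒰 (fun n => φ ⟨h.1 n, hsupp _ h.2 n⟩)
      (φ ⟨chi lam (xi h), single_mem_supported ℚ 1 (hxi h).1⟩) := by
    rintro ⟨h, hh⟩
    by_cases hp : h ∈ p.Gs
    · convert p.phi_ulim ⟨h, hp⟩ using 1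
      · exact funext fun n => hφ _ _
      · simp only [xi, dif_pos hp]
        exact hφ _ _
    · obtain rfl : h = g := (mem_insert_iff.1 hh).resolve_right hp
      convert hz using 1
      · exact funext fun n => extendAt_of_apply_eq_zero _ (hgξ n)
      · simp only [xi, dif_neg hp]
        exact (extendAt_single hξE _).trans hψ
  exact ⟨⟨E', hE', fun y hy => hpE' (p.omega_subset y hy), p.alpha, p.alpha_lt, insert g p.Gs,
      insert_subset hg p.Gs_subset, p.Gs_countable.insert g, hsupp, xi, hxi, φ, hulim⟩,
    mem_insert _ _, ⟨hpE', le_rfl, subset_insert _ _, fun h => dif_pos h.2,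
      fun a ha β hβ => congrFun (hφ a ha) ⟨β, hβ⟩⟩⟩

end PCond

theorem statement8_general (lam : Cardinal) (hclam : Cardinal.continuum ≤ lam)
    (𝒰 : Ultrafilter ℕ) (H : Set (ℕ → G lam))
    (g : ℕ → G lam) (hg : g ∈ H) :
    IsOpenD {p : PCond lam 𝒰 H | g ∈ p.Gs} ∧
    IsDenseD {p : PCond lam 𝒰 H | g ∈ p.Gs} := by
  refine ⟨fun p hp q hq => hq.Gs_sub hp, fun p => ?_⟩
  set S := p.E ∪ ⋃ n, ((g n).support : Set (Idx lam))
  have hS : S.Countable :=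
    p.E_countable.union (countable_iUnion fun n => (g n).support.countable_toSet)
  obtain ⟨ξ, hξc, hξS⟩ := exists_lt_continuum_ord_notMem hclam hS
  have hgS : ∀ n, g n ∈ Finsupp.supported ℚ ℚ S := fun n =>
    (Finsupp.mem_supported ℚ _).2 (subset_iUnion (fun n => ((g n).support : Set (Idx lam))) n
      |>.trans subset_union_right)
  exact p.exists_le_mem_Gs hg (hS.insert ξ) (subset_union_left.trans (subset_insert _ _))
    (fun n => Finsupp.supported_mono (subset_insert _ _) (hgS n)) (mem_insert _ _)
    (fun h => hξS (Or.inl h)) hξc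
    (fun n => Finsupp.notMem_support_iff.1 fun h => hξS ((Finsupp.mem_supported ℚ _).1 (hgS n) h))

/-- For each `g ∈ ℋ`, the set `𝒮_g = {p ∈ 𝒫 : g ∈ 𝒢^p}` is open and dense in `𝒫`. -/
theorem statement8 (lam : Cardinal) (hclam : Cardinal.continuum ≤ lam)
    (𝒰 : Ultrafilter ℕ) (hsel : IsSelective 𝒰) (H : Set (ℕ → G lam))
    (hH : LinearIndependent ℚ (extFam lam 𝒰 H))
    (g : ℕ → G lam) (hg : g ∈ H) :
    IsOpenD {p : PCond lam 𝒰 H | g ∈ p.Gs} ∧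
    IsDenseD {p : PCond lam 𝒰 H | g ∈ p.Gs} :=
  statement8_general lam hclam 𝒰 H g hg
end
end

section
/- The poset 𝒫 is ω₁-closed: for every decreasing sequence (p_t : t ∈ ω) in 𝒫 (i.e., p_{t+1} ≤ p_t for all t) there exists r ∈ 𝒫 such that r ≤ p_t for every t ∈ ω. -/
open Cardinal Filter Set

noncomputable section

theorem aleph0_lt_cof_continuum : ℵ₀ < (Cardinal.continuum.ord).cof := by
  by_contra h
  push_neg at h
  have h1 : Cardinal.continuum < Cardinal.continuum ^ (Cardinal.continuum.ord).cof :=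
    Cardinal.lt_power_cof Cardinal.aleph0_le_continuum
  have h2 : Cardinal.continuum ^ (Cardinal.continuum.ord).cof ≤ Cardinal.continuum ^ ℵ₀ :=
    Cardinal.power_le_power_left Cardinal.continuum_ne_zero h
  rw [Cardinal.continuum_power_aleph0] at h2
  exact absurd (h1.trans_le h2) (lt_irrefl _)

section Chain

variable {lam : Cardinal} {𝒰 : Ultrafilter ℕ} {H : Set (ℕ → G lam)}

theorem PLe.refl' (p : PCond lam 𝒰 H) : PLe p p where
  E_sub := subset_rfl
  alpha_le := le_rfl
  Gs_sub := subset_rfl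
  xi_eq g := rfl
  phi_eq a ha β hβ := rfl

theorem PLe.trans' {r q p : PCond lam 𝒰 H} (hrq : PLe r q) (hqp : PLe q p) : PLe r p where
  E_sub := hqp.E_sub.trans hrq.E_sub
  alpha_le := hqp.alpha_le.trans hrq.alpha_le
  Gs_sub := hqp.Gs_sub.trans hrq.Gs_sub
  xi_eq g := (hrq.xi_eq ⟨g.1, hqp.Gs_sub g.2⟩).trans (hqp.xi_eq g)
  phi_eq a ha β hβ :=
    (hrq.phi_eq a (Finsupp.supported_mono hqp.E_sub ha) β
      (lt_of_lt_of_le hβ hqp.alpha_le)).trans (hqp.phi_eq a ha β hβ)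

end Chain

/-- `𝒫` is `ω₁`-closed: every decreasing `ω`-sequence of conditions has a lower bound. -/
theorem statement9 (lam : Cardinal) (hclam : Cardinal.continuum ≤ lam)
    (𝒰 : Ultrafilter ℕ) (hsel : IsSelective 𝒰) (H : Set (ℕ → G lam))
    (hH : LinearIndependent ℚ (extFam lam 𝒰 H))
    (p : ℕ → PCond lam 𝒰 H) (hdec : ∀ t : ℕ, PLe (p (t + 1)) (p t)) :
    ∃ r : PCond lam 𝒰 H, ∀ t : ℕ, PLe r (p t) := by
  classical
  have hmono : ∀ s t : ℕ, s ≤ t → PLe (p t) (p s) := by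
    intro s t hst
    induction t, hst using Nat.le_induction with
    | base => exact PLe.refl' _
    | succ t ht ih => exact PLe.trans' (hdec t) ih
  have hEmono : ∀ s t, s ≤ t → (p s).E ⊆ (p t).E := fun s t h => (hmono s t h).E_sub
  have hamono : ∀ s t, s ≤ t → (p s).alpha ≤ (p t).alpha := fun s t h => (hmono s t h).alpha_le
  have hGmono : ∀ s t, s ≤ t → (p s).Gs ⊆ (p t).Gs := fun s t h => (hmono s t h).Gs_sub
  set E : Set (Idx lam) := ⋃ t, (p t).E with hEdef
  set A : Ordinal := ⨆ t, (p t).alpha with hAdef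
  have hA_lt : A < Cardinal.continuum.ord := by
    rw [hAdef]
    exact Ordinal.iSup_lt_ord_lift
      (by rw [Cardinal.mk_nat, Cardinal.lift_aleph0]; exact aleph0_lt_cof_continuum)
      fun t => (p t).alpha_lt
  -- coherence of xi
  have xi_coh : ∀ (s t : ℕ) (g : ℕ → G lam) (hs : g ∈ (p s).Gs) (ht : g ∈ (p t).Gs),
      (p s).xi ⟨g, hs⟩ = (p t).xi ⟨g, ht⟩ := by
    have key : ∀ s t, s ≤ t → ∀ (g : ℕ → G lam) (hs : g ∈ (p s).Gs) (ht : g ∈ (p t).Gs),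
        (p s).xi ⟨g, hs⟩ = (p t).xi ⟨g, ht⟩ := by
      intro s t h g hs ht
      exact ((hmono s t h).xi_eq ⟨g, hs⟩).symm
    intro s t g hs ht
    rcases le_total s t with h | h
    · exact key s t h g hs ht
    · exact (key t s h g ht hs).symm
  -- coherence of phi
  have phi_coh : ∀ (s t : ℕ) (a : G lam) (has : a ∈ Finsupp.supported ℚ ℚ (p s).E)
      (hat : a ∈ Finsupp.supported ℚ ℚ (p t).E) (β : Ordinal) (hβs : β < (p s).alpha)
      (hβt : β < (p t).alpha),
      (p s).phi ⟨a, has⟩ ⟨β, hβs⟩ = (p t).phi ⟨a, hat⟩ ⟨β, hβt⟩ := by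
    have key : ∀ s t, s ≤ t → ∀ (a : G lam) (has : a ∈ Finsupp.supported ℚ ℚ (p s).E)
        (hat : a ∈ Finsupp.supported ℚ ℚ (p t).E) (β : Ordinal) (hβs : β < (p s).alpha)
        (hβt : β < (p t).alpha),
        (p s).phi ⟨a, has⟩ ⟨β, hβs⟩ = (p t).phi ⟨a, hat⟩ ⟨β, hβt⟩ := by
      intro s t h a has hat β hβs hβt
      exact ((hmono s t h).phi_eq a has β hβs).symm
    intro s t a has hat β hβs hβt
    rcases le_total s t with h | h
    · exact key s t h a has hat β hβs hβt
    · exact (key t s h a hat has β hβt hβs).symm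
  -- every element of ℚ^(E) lives at some finite stage
  have exists_supp : ∀ a : G lam, a ∈ Finsupp.supported ℚ ℚ E →
      ∃ t, a ∈ Finsupp.supported ℚ ℚ (p t).E := by
    intro a ha
    rw [Finsupp.mem_supported] at ha
    have hx : ∀ x : Idx lam, ∃ t, x ∈ a.support → x ∈ (p t).E := by
      intro x
      by_cases h : x ∈ a.support
      · obtain ⟨t, ht⟩ := mem_iUnion.mp (ha h)
        exact ⟨t, fun _ => ht⟩
      · exact ⟨0, fun h' => absurd h' h⟩
    choose f hf using hx
    refine ⟨a.support.sup f, ?_⟩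
    rw [Finsupp.mem_supported]
    intro x hx'
    exact hEmono (f x) _ (Finset.le_sup (Finset.mem_coe.mp hx')) (hf x hx')
  have exists_beta : ∀ β : Ordinal, β < A → ∃ t, β < (p t).alpha := by
    intro β hβ
    exact Ordinal.lt_iSup_iff.mp hβ
  -- a common stage for a pair (a, β)
  have exists_both : ∀ (a : ↥(Finsupp.supported ℚ ℚ E)) (β : {β : Ordinal // β < A}),
      ∃ t, a.1 ∈ Finsupp.supported ℚ ℚ (p t).E ∧ β.1 < (p t).alpha := by
    intro a β
    obtain ⟨s, hs⟩ := exists_supp a.1 a.2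
    obtain ⟨u, hu⟩ := exists_beta β.1 β.2
    exact ⟨max s u, Finsupp.supported_mono (hEmono s _ (le_max_left s u)) hs,
      hu.trans_le (hamono u _ (le_max_right s u))⟩
  choose T hT1 hT2 using exists_both
  set Φ : ↥(Finsupp.supported ℚ ℚ E) → ({β : Ordinal // β < A} → CircleT) :=
    fun a β => (p (T a β)).phi ⟨a.1, hT1 a β⟩ ⟨β.1, hT2 a β⟩ with hΦdef
  have Φ_eq : ∀ (a : ↥(Finsupp.supported ℚ ℚ E)) (β : {β : Ordinal // β < A}) (t : ℕ)
      (hat : a.1 ∈ Finsupp.supported ℚ ℚ (p t).E) (hβt : β.1 < (p t).alpha),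
      Φ a β = (p t).phi ⟨a.1, hat⟩ ⟨β.1, hβt⟩ :=
    fun a β t hat hβt => phi_coh _ t a.1 _ hat β.1 _ hβt
  have Φ_add : ∀ a b, Φ (a + b) = Φ a + Φ b := by
    intro a b
    funext β
    obtain ⟨s, hs⟩ := exists_supp a.1 a.2
    obtain ⟨u, hu⟩ := exists_supp b.1 b.2
    obtain ⟨v, hv⟩ := exists_beta β.1 β.2
    set t := max (max s u) v with htdef
    have has : a.1 ∈ Finsupp.supported ℚ ℚ (p t).E :=
      Finsupp.supported_mono (hEmono s t ((le_max_left s u).trans (le_max_left _ v))) hs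
    have hbs : b.1 ∈ Finsupp.supported ℚ ℚ (p t).E :=
      Finsupp.supported_mono (hEmono u t ((le_max_right s u).trans (le_max_left _ v))) hu
    have hab : (a + b).1 ∈ Finsupp.supported ℚ ℚ (p t).E := add_mem has hbs
    have hβ : β.1 < (p t).alpha := hv.trans_le (hamono v t (le_max_right _ v))
    rw [Pi.add_apply, Φ_eq (a + b) β t hab hβ, Φ_eq a β t has hβ, Φ_eq b β t hbs hβ]
    exact congrFun (map_add (p t).phi ⟨a.1, has⟩ ⟨b.1, hbs⟩) ⟨β.1, hβ⟩
  -- the union of the Gs's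
  set Gr : Set (ℕ → G lam) := ⋃ t, (p t).Gs with hGrdef
  have exists_G : ∀ g : Gr, ∃ t, g.1 ∈ (p t).Gs := fun g => mem_iUnion.mp g.2
  choose tg htg using exists_G
  set xir : Gr → Idx lam := fun g => (p (tg g)).xi ⟨g.1, htg g⟩ with hxirdef
  have supp_mem' : ∀ g ∈ Gr, ∀ n : ℕ, g n ∈ Finsupp.supported ℚ ℚ E := by
    intro g hg n
    obtain ⟨t, ht⟩ := mem_iUnion.mp hg
    exact Finsupp.supported_mono (subset_iUnion (fun t => (p t).E) t) ((p t).supp_mem g ht n)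
  have xi_mem' : ∀ g : Gr, xir g ∈ E ∧ (xir g).1 < Cardinal.continuum.ord := fun g =>
    ⟨mem_iUnion.mpr ⟨tg g, ((p (tg g)).xi_mem ⟨g.1, htg g⟩).1⟩,
      ((p (tg g)).xi_mem ⟨g.1, htg g⟩).2⟩
  refine ⟨{
    E := E
    E_countable := countable_iUnion fun t => (p t).E_countable
    omega_subset := fun x hx => mem_iUnion.mpr ⟨0, (p 0).omega_subset x hx⟩
    alpha := A
    alpha_lt := hA_lt
    Gs := Gr
    Gs_subset := iUnion_subset fun t => (p t).Gs_subset
    Gs_countable := countable_iUnion fun t => (p t).Gs_countable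
    supp_mem := supp_mem'
    xi := xir
    xi_mem := xi_mem'
    phi := AddMonoidHom.mk' Φ Φ_add
    phi_ulim := ?_ }, ?_⟩
  · -- the 𝒰-limit condition
    intro g
    have hchi : chi lam (xir g) ∈ Finsupp.supported ℚ ℚ E :=
      Finsupp.single_mem_supported ℚ 1 (xi_mem' g).1
    suffices h : Tendsto (fun n => Φ ⟨g.1 n, supp_mem' g.1 g.2 n⟩) ↑𝒰
        (nhds (Φ ⟨chi lam (xir g), hchi⟩)) by
      intro S hS
      exact h hS
    rw [tendsto_pi_nhds]
    intro β
    obtain ⟨v, hv⟩ := exists_beta β.1 β.2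
    set u := max (tg g) v with hudef
    have hgu : g.1 ∈ (p u).Gs := hGmono (tg g) u (le_max_left _ _) (htg g)
    have hβu : β.1 < (p u).alpha := hv.trans_le (hamono v u (le_max_right _ _))
    have hxi : xir g = (p u).xi ⟨g.1, hgu⟩ := xi_coh (tg g) u g.1 (htg g) hgu
    have hchiu : chi lam (xir g) ∈ Finsupp.supported ℚ ℚ (p u).E := by
      rw [hxi]
      exact Finsupp.single_mem_supported ℚ 1 ((p u).xi_mem ⟨g.1, hgu⟩).1
    have hU := (p u).phi_ulim ⟨g.1, hgu⟩
    have hT : Tendsto (fun n => (p u).phi ⟨g.1 n, (p u).supp_mem g.1 hgu n⟩)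
        ↑𝒰 (nhds ((p u).phi ⟨chi lam ((p u).xi ⟨g.1, hgu⟩),
          Finsupp.single_mem_supported ℚ 1 ((p u).xi_mem ⟨g.1, hgu⟩).1⟩)) :=
      Filter.tendsto_def.mpr fun S hS => hU S hS
    have hT2 := tendsto_pi_nhds.mp hT ⟨β.1, hβu⟩
    have hseq : (fun n => Φ ⟨g.1 n, supp_mem' g.1 g.2 n⟩ β)
        = fun n => (p u).phi ⟨g.1 n, (p u).supp_mem g.1 hgu n⟩ ⟨β.1, hβu⟩ :=
      funext fun n => Φ_eq _ β u ((p u).supp_mem g.1 hgu n) hβu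
    have hpt : Φ ⟨chi lam (xir g), hchi⟩ β
        = (p u).phi ⟨chi lam ((p u).xi ⟨g.1, hgu⟩),
            Finsupp.single_mem_supported ℚ 1 ((p u).xi_mem ⟨g.1, hgu⟩).1⟩ ⟨β.1, hβu⟩ := by
      rw [Φ_eq ⟨chi lam (xir g), hchi⟩ β u hchiu hβu]
      exact congrFun (congrArg _ (Subtype.ext (congrArg (chi lam) hxi))) _
    rw [hseq, hpt]
    exact hT2
  · -- r ≤ p t
    intro t
    exact {
      E_sub := subset_iUnion (fun t => (p t).E) t
      alpha_le := le_ciSup Ordinal.bddAbove_of_small t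
      Gs_sub := subset_iUnion (fun t => (p t).Gs) t
      xi_eq := fun g => xi_coh _ t g.1 (htg _) g.2
      phi_eq := fun a ha β hβ => Φ_eq ⟨a, _⟩ ⟨β, _⟩ t ha hβ }
end
end

section
/- Let p, q ∈ 𝒫 satisfy: α^p = α^q; φ^p and φ^q agree on ℚ^(E^p ∩ E^q); and ξ^p_g = ξ^q_g for every g ∈ 𝒢^p ∩ 𝒢^q. Then p and q are compatible, i.e., there exists r ∈ 𝒫 with r ≤ p and r ≤ q. -/
/-!
The common extension of `p` and `q` lives on `E^p ∪ E^q` and `𝒢^p ∪ 𝒢^q`, with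
`α = α^p = α^q`. Its homomorphism sends `a` to `φ^p(a|_{E^p}) + φ^q(a|_{E^q \ E^p})`; because
`φ^p` and `φ^q` agree on `ℚ^(E^p ∩ E^q)`, this extends both of them, so the `𝒰`-limit
conditions are inherited from `p` and from `q`, while the `ξ`'s glue because they agree on
`𝒢^p ∩ 𝒢^q`.
-/

open Cardinal Filter Set

noncomputable section

namespace Finsupp

variable {ι R M N : Type*} [Semiring R] [AddCommMonoid M] [Module R M] [AddCommMonoid N]
  {E F : Set ι}

theorem exists_addMonoidHom_supported_union_extend (f : supported M R E →+ N)
    (g : supported M R F →+ N)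
    (hfg : ∀ a (hE : a ∈ supported M R E) (hF : a ∈ supported M R F),
      f ⟨a, hE⟩ = g ⟨a, hF⟩) :
    ∃ h : supported M R (E ∪ F) →+ N,
      (∀ a (hE : a ∈ supported M R E) (hEF : a ∈ supported M R (E ∪ F)),
        h ⟨a, hEF⟩ = f ⟨a, hE⟩) ∧
      (∀ a (hF : a ∈ supported M R F) (hEF : a ∈ supported M R (E ∪ F)),
        h ⟨a, hEF⟩ = g ⟨a, hF⟩) := by
  classical
  let toE := (restrictDom M R E).comp (supported M R (E ∪ F)).subtype
  let toFE := (Submodule.inclusion (supported_mono Set.sdiff_subset)).comp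
    ((restrictDom M R (F \ E)).comp (supported M R (E ∪ F)).subtype)
  refine ⟨f.comp toE.toAddMonoidHom + g.comp toFE.toAddMonoidHom, fun a hE hEF => ?_,
    fun a hF hEF => ?_⟩
  · have hfilterE : toE ⟨a, hEF⟩ = ⟨a, hE⟩ :=
      Subtype.ext <| (filter_eq_self_iff _ _).2 fun x hx => by
        by_contra h
        exact hx ((mem_supported' R a).1 hE x h)
    have hfilterFE : toFE ⟨a, hEF⟩ = 0 :=
      Subtype.ext <| (filter_eq_zero_iff _ _).2 fun x hx => (mem_supported' R a).1 hE x hx.2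
    simp [hfilterE, hfilterFE]
  · have hsplit : (toE ⟨a, hEF⟩ : ι →₀ M) + toFE ⟨a, hEF⟩ = a := by
      ext x
      by_cases hxE : x ∈ E <;> by_cases hxF : x ∈ F <;>
        simp [toE, toFE, hxE, hxF, (mem_supported' R a).1 hF x]
    have hEpart : (toE ⟨a, hEF⟩ : ι →₀ M) ∈ supported M R F :=
      (mem_supported' R _).2 fun x hx => by
        simp [toE, filter_apply, (mem_supported' R a).1 hF x hx]
    simp only [AddMonoidHom.add_apply, AddMonoidHom.comp_apply, LinearMap.toAddMonoidHom_coe]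
    rw [hfg _ (toE ⟨a, hEF⟩).2 hEpart, ← map_add]
    exact congrArg g (Subtype.ext hsplit)

end Finsupp

theorem ULim.comp_continuous {X Y : Type*} [TopologicalSpace X] [TopologicalSpace Y]
    {𝒰 : Ultrafilter ℕ} {x : ℕ → X} {z : X} (h : ULim 𝒰 x z) {f : X → Y}
    (hf : Continuous f) :
    ULim 𝒰 (fun n => f (x n)) (f z) :=
  fun A hA => h (f ⁻¹' A) (hf.continuousAt.preimage_mem_nhds hA)

section Truncate

variable {M : Type*} [AddZeroClass M] {α α' : Ordinal}

def truncate (h : α ≤ α') :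
    ({β : Ordinal // β < α'} → M) →+ ({β : Ordinal // β < α} → M) :=
  AddMonoidHom.pi fun β => Pi.evalAddMonoidHom (fun _ => M) ⟨β.1, β.2.trans_le h⟩

theorem continuous_truncate [TopologicalSpace M] (h : α ≤ α') :
    Continuous (truncate (M := M) h) :=
  continuous_pi fun _ => continuous_apply _

end Truncate

namespace PCond

variable {lam : Cardinal} {𝒰 : Ultrafilter ℕ} {H : Set (ℕ → G lam)} (p q : PCond lam 𝒰 H)

open Classical in
def unionXi : (p.Gs ∪ q.Gs : Set (ℕ → G lam)) → Idx lam := fun g =>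
  if h : g.1 ∈ p.Gs then p.xi ⟨g, h⟩ else q.xi ⟨g, g.2.resolve_left h⟩

variable {p q}

theorem unionXi_of_mem_left (g : (p.Gs ∪ q.Gs : Set (ℕ → G lam))) (hp : g.1 ∈ p.Gs) :
    unionXi p q g = p.xi ⟨g, hp⟩ :=
  dif_pos hp

theorem unionXi_of_mem_right
    (hxi : ∀ g (hp : g ∈ p.Gs) (hq : g ∈ q.Gs), p.xi ⟨g, hp⟩ = q.xi ⟨g, hq⟩)
    (g : (p.Gs ∪ q.Gs : Set (ℕ → G lam))) (hq : g.1 ∈ q.Gs) :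
    unionXi p q g = q.xi ⟨g, hq⟩ := by
  by_cases hp : g.1 ∈ p.Gs
  · exact (dif_pos hp).trans (hxi g hp hq)
  · exact dif_neg hp

theorem unionXi_mem (g : (p.Gs ∪ q.Gs : Set (ℕ → G lam))) :
    unionXi p q g ∈ p.E ∪ q.E ∧ (unionXi p q g).1 < continuum.ord := by
  unfold unionXi
  split_ifs
  · exact ⟨Or.inl (p.xi_mem _).1, (p.xi_mem _).2⟩
  · exact ⟨Or.inr (q.xi_mem _).1, (q.xi_mem _).2⟩

variable (hα : p.alpha ≤ q.alpha)
  (hxi : ∀ g (hp : g ∈ p.Gs) (hq : g ∈ q.Gs), p.xi ⟨g, hp⟩ = q.xi ⟨g, hq⟩)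
  (Φ : Finsupp.supported ℚ ℚ (p.E ∪ q.E) →+ ({β : Ordinal // β < p.alpha} → CircleT))
  (hΦp : ∀ a (hp : a ∈ Finsupp.supported ℚ ℚ p.E)
    (hpq : a ∈ Finsupp.supported ℚ ℚ (p.E ∪ q.E)), Φ ⟨a, hpq⟩ = p.phi ⟨a, hp⟩)
  (hΦq : ∀ a (hq : a ∈ Finsupp.supported ℚ ℚ q.E)
    (hpq : a ∈ Finsupp.supported ℚ ℚ (p.E ∪ q.E)), Φ ⟨a, hpq⟩ = truncate hα (q.phi ⟨a, hq⟩))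

def amalgam : PCond lam 𝒰 H where
  E := p.E ∪ q.E
  E_countable := p.E_countable.union q.E_countable
  omega_subset x hx := Or.inl (p.omega_subset x hx)
  alpha := p.alpha
  alpha_lt := p.alpha_lt
  Gs := p.Gs ∪ q.Gs
  Gs_subset := union_subset p.Gs_subset q.Gs_subset
  Gs_countable := p.Gs_countable.union q.Gs_countable
  supp_mem := by
    rintro g (hg | hg) n
    exacts [Finsupp.supported_mono subset_union_left (p.supp_mem g hg n),
      Finsupp.supported_mono subset_union_right (q.supp_mem g hg n)]
  xi := unionXi p q
  xi_mem := unionXi_mem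
  phi := Φ
  phi_ulim g := by
    rcases g.2 with hg | hg
    · convert p.phi_ulim ⟨g, hg⟩ using 2
      · exact hΦp _ _ _
      · simp only [unionXi_of_mem_left g hg]
        exact hΦp _ _ _
    · convert (q.phi_ulim ⟨g, hg⟩).comp_continuous (continuous_truncate hα) using 2
      · exact hΦq _ _ _
      · simp only [unionXi_of_mem_right hxi g hg]
        exact hΦq _ _ _

theorem amalgam_le_left : PLe (amalgam hα hxi Φ hΦp hΦq) p where
  E_sub := subset_union_left
  alpha_le := le_rfl
  Gs_sub := subset_union_left
  xi_eq g := unionXi_of_mem_left _ g.2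
  phi_eq a ha _ _ := congrFun (hΦp a ha _) _

theorem amalgam_le_right (hα' : q.alpha ≤ p.alpha) : PLe (amalgam hα hxi Φ hΦp hΦq) q where
  E_sub := subset_union_right
  alpha_le := hα'
  Gs_sub := subset_union_right
  xi_eq g := unionXi_of_mem_right hxi _ g.2
  phi_eq a ha β hβ := congrFun (hΦq a ha _) ⟨β, hβ.trans_le hα'⟩

end PCond

theorem statement12_general (lam : Cardinal)
    (𝒰 : Ultrafilter ℕ) (H : Set (ℕ → G lam))
    (p q : PCond lam 𝒰 H) (halpha : p.alpha = q.alpha)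
    (hphi : ∀ a (hp : a ∈ Finsupp.supported ℚ ℚ p.E) (hq : a ∈ Finsupp.supported ℚ ℚ q.E)
      (β : Ordinal) (hβ : β < p.alpha),
      p.phi ⟨a, hp⟩ ⟨β, hβ⟩ = q.phi ⟨a, hq⟩ ⟨β, lt_of_lt_of_le hβ (le_of_eq halpha)⟩)
    (hxi : ∀ g (hp : g ∈ p.Gs) (hq : g ∈ q.Gs), p.xi ⟨g, hp⟩ = q.xi ⟨g, hq⟩) :
    PCompat p q := by
  obtain ⟨Φ, hΦp, hΦq⟩ := Finsupp.exists_addMonoidHom_supported_union_extend p.phi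
    ((truncate halpha.le).comp q.phi) fun a hp hq => funext fun β => hphi a hp hq β.1 β.2
  exact ⟨PCond.amalgam halpha.le hxi Φ hΦp hΦq, PCond.amalgam_le_left ..,
    PCond.amalgam_le_right (hα' := halpha.ge) ..⟩

/-- Two conditions with the same `α`, whose homomorphisms agree on `ℚ^(E^p ∩ E^q)`
and whose `ξ`'s agree on `𝒢^p ∩ 𝒢^q`, are compatible. -/
theorem statement12 (lam : Cardinal) (hclam : Cardinal.continuum ≤ lam)
    (𝒰 : Ultrafilter ℕ) (hsel : IsSelective 𝒰) (H : Set (ℕ → G lam))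
    (hH : LinearIndependent ℚ (extFam lam 𝒰 H))
    (p q : PCond lam 𝒰 H) (halpha : p.alpha = q.alpha)
    (hphi : ∀ a (hp : a ∈ Finsupp.supported ℚ ℚ p.E) (hq : a ∈ Finsupp.supported ℚ ℚ q.E)
      (β : Ordinal) (hβ : β < p.alpha),
      p.phi ⟨a, hp⟩ ⟨β, hβ⟩ = q.phi ⟨a, hq⟩ ⟨β, lt_of_lt_of_le hβ (le_of_eq halpha)⟩)
    (hxi : ∀ g (hp : g ∈ p.Gs) (hq : g ∈ q.Gs), p.xi ⟨g, hp⟩ = q.xi ⟨g, hq⟩) :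
    PCompat p q :=
  statement12_general lam 𝒰 H p q halpha hphi hxi
end
end

section
/- Let 𝒰 be an ultrafilter on ω, let τ be a topology on G making (G, τ) a topological group, and let ℋ ⊆ G^ω be such that the family ([g]_𝒰 : g ∈ ℋ) together with ([χ⃗_μ]_𝒰 : μ ∈ λ) spans Ult_𝒰(G) over ℚ. Suppose that for every g ∈ ℋ and every integer N ≥ 1 the sequence ((1/N)·g(n) : n ∈ ω) has a 𝒰-limit in (G, τ). Then (G, τ) is 𝒰-compact: every sequence in G has a 𝒰-limit in (G, τ). -/
open Cardinal Filter Set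

noncomputable section

/-- `𝒰`-limit with respect to an explicitly given topology. -/
def ULimAt {X : Type*} (t : TopologicalSpace X) (𝒰 : Ultrafilter ℕ) (x : ℕ → X) (z : X) :
    Prop :=
  ∀ A ∈ @nhds X t z, {n | x n ∈ A} ∈ 𝒰

/-- If `([g]_𝒰 : g ∈ ℋ) ∪ ([χ⃗_μ]_𝒰 : μ ∈ λ)` spans `Ult_𝒰(G)` and every sequence
`(1/N)·g` with `g ∈ ℋ` has a `𝒰`-limit in a group topology `τ` on `G`, then `(G, τ)`
is `𝒰`-compact. -/
theorem statement13 (lam : Cardinal) (hlam : ℵ₀ ≤ lam) (𝒰 : Ultrafilter ℕ)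
    (τ : TopologicalSpace (G lam)) (htg : @IsTopologicalAddGroup (G lam) τ _)
    (H : Set (ℕ → G lam))
    (hspan : ⊤ ≤ Submodule.span ℚ (Set.range (extFam lam 𝒰 H)))
    (hlim : ∀ g ∈ H, ∀ N : ℕ, 1 ≤ N →
      ∃ z : G lam, ULimAt τ 𝒰 (fun n => (N : ℚ)⁻¹ • g n) z) :
    ∀ f : ℕ → G lam, ∃ z : G lam, ULimAt τ 𝒰 f z := by
  letI := τ
  haveI := htg
  classical
  intro f
  set rep : ↥H ⊕ Idx lam → ℕ → G lam :=
    Sum.elim (fun g : ↥H => (g : ℕ → G lam)) (fun μ => fun _ => chi lam μ) with hrep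
  let L : (ℕ → G lam) →ₗ[ℚ] Filter.Germ (𝒰 : Filter ℕ) (G lam) :=
    { toFun := fun g => (g : Filter.Germ (𝒰 : Filter ℕ) (G lam))
      map_add' := fun _ _ => rfl
      map_smul' := fun _ _ => rfl }
  have hmem : germ lam 𝒰 f ∈ Submodule.span ℚ (Set.range (extFam lam 𝒰 H)) :=
    hspan Submodule.mem_top
  rw [Finsupp.mem_span_range_iff_exists_finsupp] at hmem
  obtain ⟨c, hc⟩ := hmem
  have hfam : ∀ i, extFam lam 𝒰 H i = L (rep i) := by
    rintro (g | μ) <;> rfl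
  have hc' : L (c.sum fun i a => a • rep i) = L f := by
    rw [map_finsuppSum]
    simp only [map_smul]
    rw [show L f = germ lam 𝒰 f from rfl, ← hc]
    exact (Finsupp.sum_congr fun i _ => by rw [hfam]).symm
  have heq : (c.sum fun i a => a • rep i) =ᶠ[(𝒰 : Filter ℕ)] f :=
    Filter.Germ.coe_eq.mp hc'
  -- each term has a 𝒰-limit
  have hterm : ∀ i, ∃ z, Filter.Tendsto (fun n => c i • rep i n)
      (𝒰 : Filter ℕ) (nhds z) := by
    rintro (g | μ)
    · set q := c (Sum.inl g) with hq
      obtain ⟨z, hz⟩ := hlim g.1 g.2 q.den q.den_pos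
      have hz' : Filter.Tendsto (fun n => (q.den : ℚ)⁻¹ • (g : ℕ → G lam) n)
          (𝒰 : Filter ℕ) (nhds z) := Filter.tendsto_def.mpr hz
      refine ⟨q.num • z, ?_⟩
      have h2 : Filter.Tendsto (fun n => q.num • ((q.den : ℚ)⁻¹ • (g : ℕ → G lam) n))
          (𝒰 : Filter ℕ) (nhds (q.num • z)) :=
        ((continuous_zsmul q.num).tendsto z).comp hz'
      refine h2.congr fun n => ?_
      rw [← Int.cast_smul_eq_zsmul ℚ, smul_smul]
      have : (q.num : ℚ) * (q.den : ℚ)⁻¹ = q := by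
        rw [← div_eq_mul_inv]; exact Rat.num_div_den q
      simp only [hrep, Sum.elim_inl, this]
    · exact ⟨c (Sum.inr μ) • chi lam μ, tendsto_const_nhds⟩
  choose z hz using hterm
  have hsum : Filter.Tendsto (fun n => ∑ i ∈ c.support, c i • rep i n)
      (𝒰 : Filter ℕ) (nhds (∑ i ∈ c.support, z i)) :=
    tendsto_finset_sum _ fun i _ => hz i
  have hF : ∀ n, (c.sum fun i a => a • rep i) n = ∑ i ∈ c.support, c i • rep i n := by
    intro n
    rw [Finsupp.sum, Finset.sum_apply]
    rfl
  refine ⟨∑ i ∈ c.support, z i, ?_⟩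
  have hT : Filter.Tendsto f (𝒰 : Filter ℕ) (nhds (∑ i ∈ c.support, z i)) := by
    refine Filter.Tendsto.congr' ?_ hsum
    filter_upwards [heq] with n hn
    rw [← hF n, hn]
  exact fun A hA => Filter.tendsto_def.mp hT A hA
end
end
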